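/- arXiv:1703.00108 — 3 statements merged into one kernel-verified Lean document; each statement's English description precedes it below -/
import Mathlib

section
/- For every prime p and integer u ≥ 0, the constants α_{p,u,r} satisfy ∑_{r=0}^∞ α_{p,u,r} = 1. -/
/-- The Cohen–Lenstra constant
`α_{p,u,r} = (∏_{i=r+1}^∞ (1 − p^{−i})) / (p^{r(u+r)} ∏_{i=1}^{r+u} (1 − p^{−i}))`. -/
noncomputable def cohenLenstraAlpha (p u r : ℕ) : ℝ :=
  (∏' i : ℕ, (1 - ((p : ℝ))⁻¹ ^ (r + 1 + i))) /
    ((p : ℝ) ^ (r * (u + r)) * ∏ i ∈ Finset.range (r + u), (1 - ((p : ℝ))⁻¹ ^ (i + 1)))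

/-!
Put `x = 1/p`. Then `α_{p,u,r} = (x;x)_∞ · x^{r(r+u)} / ((x;x)_r (x;x)_{r+u})`, so the claim is
Cauchy's identity `S_u := ∑_r x^{r(r+u)} / ((x;x)_r (x;x)_{r+u}) = 1 / (x;x)_∞`, which counts
partitions by their Durfee rectangle. Peeling one factor off each denominator gives
`S_u - S_{u+1} = x^{u+1} (S_{u+2} - S_{u+1})`; since the `S_u` are uniformly bounded, iterating
this forces `S_u = S_{u+1}`. Finally `S_u → 1 / (x;x)_∞` as `u → ∞` by dominated convergence,
because only the `r = 0` term survives in the limit.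
-/

open Finset Filter Topology

lemma tprod_one_sub_pos {ι : Type*} {f : ι → ℝ} (hf : Summable f) (hf1 : ∀ i, f i < 1) :
    0 < ∏' i, (1 - f i) := by
  have hlog : Summable fun i => Real.log (1 - f i) := by
    simpa [sub_eq_add_neg] using Real.summable_log_one_add_of_summable hf.neg
  rw [← Real.rexp_tsum_eq_tprod (fun i => sub_pos.2 (hf1 i)) hlog]
  exact Real.exp_pos _

lemma eq_zero_of_abs_le_mul_abs_succ {f : ℕ → ℝ} {c B : ℝ} (hc0 : 0 ≤ c) (hc1 : c < 1)
    (hB : ∀ n, |f n| ≤ B) (hf : ∀ n, |f n| ≤ c * |f (n + 1)|) (n : ℕ) : f n = 0 := by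
  have hiter : ∀ k n, |f n| ≤ c ^ k * B := by
    intro k
    induction k with
    | zero => simpa using hB
    | succ k ih =>
      intro n
      calc |f n| ≤ c * |f (n + 1)| := hf n
        _ ≤ c * (c ^ k * B) := mul_le_mul_of_nonneg_left (ih _) hc0
        _ = c ^ (k + 1) * B := by ring
  have hlim : Tendsto (fun k => c ^ k * B) atTop (𝓝 0) := by
    simpa using (tendsto_pow_atTop_nhds_zero_of_lt_one hc0 hc1).mul_const B
  exact abs_nonpos_iff.1 (ge_of_tendsto' hlim fun k => hiter k n)

namespace CohenLenstra

/-- `(x; x)_n` -/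
noncomputable def qPochhammer (x : ℝ) (n : ℕ) : ℝ := ∏ i ∈ range n, (1 - x ^ (i + 1))

/-- `(x; x)_∞` -/
noncomputable def qPochhammerInf (x : ℝ) : ℝ := ∏' i : ℕ, (1 - x ^ (i + 1))

noncomputable def durfeeTerm (x : ℝ) (u r : ℕ) : ℝ :=
  x ^ (r * (r + u)) / (qPochhammer x r * qPochhammer x (r + u))

noncomputable def durfeeSum (x : ℝ) (u : ℕ) : ℝ := ∑' r, durfeeTerm x u r

variable {x : ℝ}

@[simp] lemma qPochhammer_zero : qPochhammer x 0 = 1 := prod_range_zero _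

lemma qPochhammer_succ (n : ℕ) :
    qPochhammer x (n + 1) = qPochhammer x n * (1 - x ^ (n + 1)) :=
  prod_range_succ _ _

lemma one_sub_pow_succ_pos (hx0 : 0 ≤ x) (hx1 : x < 1) (n : ℕ) : 0 < 1 - x ^ (n + 1) :=
  sub_pos.2 (pow_lt_one₀ hx0 hx1 n.succ_ne_zero)

lemma qPochhammer_pos (hx0 : 0 ≤ x) (hx1 : x < 1) (n : ℕ) : 0 < qPochhammer x n :=
  prod_pos fun i _ => one_sub_pow_succ_pos hx0 hx1 i

lemma qPochhammer_antitone (hx0 : 0 ≤ x) (hx1 : x < 1) : Antitone (qPochhammer x) :=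
  antitone_nat_of_succ_le fun n => by
    rw [qPochhammer_succ]
    exact mul_le_of_le_one_right (qPochhammer_pos hx0 hx1 n).le
      (sub_le_self _ (pow_nonneg hx0 _))

lemma summable_pow_add (hx0 : 0 ≤ x) (hx1 : x < 1) (k : ℕ) :
    Summable fun i : ℕ => x ^ (i + k) := by
  simpa only [pow_add, mul_comm] using (summable_geometric_of_lt_one hx0 hx1).mul_left (x ^ k)

lemma multipliable_one_sub_pow_add (hx0 : 0 ≤ x) (hx1 : x < 1) (k : ℕ) :
    Multipliable fun i : ℕ => 1 - x ^ (i + k) := by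
  simpa only [sub_eq_add_neg] using
    Real.multipliable_one_add_of_summable (summable_pow_add hx0 hx1 k).neg

lemma qPochhammerInf_pos (hx0 : 0 ≤ x) (hx1 : x < 1) : 0 < qPochhammerInf x :=
  tprod_one_sub_pos (summable_pow_add hx0 hx1 1) fun i => pow_lt_one₀ hx0 hx1 i.succ_ne_zero

lemma tendsto_qPochhammer (hx0 : 0 ≤ x) (hx1 : x < 1) :
    Tendsto (qPochhammer x) atTop (𝓝 (qPochhammerInf x)) :=
  (multipliable_one_sub_pow_add hx0 hx1 1).hasProd.tendsto_prod_nat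

lemma qPochhammerInf_le (hx0 : 0 ≤ x) (hx1 : x < 1) (n : ℕ) :
    qPochhammerInf x ≤ qPochhammer x n :=
  (qPochhammer_antitone hx0 hx1).le_of_tendsto (tendsto_qPochhammer hx0 hx1) n

lemma qPochhammer_mul_tprod_tail (hx0 : 0 ≤ x) (hx1 : x < 1) (r : ℕ) :
    qPochhammer x r * ∏' i : ℕ, (1 - x ^ (r + 1 + i)) = qPochhammerInf x := by
  have h := Multipliable.prod_mul_tprod_nat_mul' (f := fun i => 1 - x ^ (i + 1)) (k := r)
    (multipliable_one_sub_pow_add hx0 hx1 (r + 1))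
  rw [qPochhammer, qPochhammerInf, ← h]
  congr 3 with i
  rw [add_right_comm, add_comm r]

lemma durfeeTerm_nonneg (hx0 : 0 ≤ x) (hx1 : x < 1) (u r : ℕ) : 0 ≤ durfeeTerm x u r :=
  div_nonneg (pow_nonneg hx0 _)
    (mul_pos (qPochhammer_pos hx0 hx1 r) (qPochhammer_pos hx0 hx1 (r + u))).le

lemma durfeeTerm_le (hx0 : 0 ≤ x) (hx1 : x < 1) (u r : ℕ) {m : ℕ} (hm : m ≤ r * (r + u)) :
    durfeeTerm x u r ≤ x ^ m / qPochhammerInf x ^ 2 := by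
  have hQ := qPochhammerInf_pos hx0 hx1
  rw [durfeeTerm, sq]
  exact div_le_div₀ (pow_nonneg hx0 _) (pow_le_pow_of_le_one hx0 hx1.le hm) (mul_pos hQ hQ)
    (mul_le_mul (qPochhammerInf_le hx0 hx1 r) (qPochhammerInf_le hx0 hx1 (r + u)) hQ.le
      (qPochhammer_pos hx0 hx1 r).le)

lemma durfeeTerm_le_geometric (hx0 : 0 ≤ x) (hx1 : x < 1) (u r : ℕ) :
    durfeeTerm x u r ≤ x ^ r / qPochhammerInf x ^ 2 :=
  durfeeTerm_le hx0 hx1 u r <|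
    (Nat.le_mul_self r).trans (Nat.mul_le_mul_left r (r.le_add_right u))

lemma summable_durfeeTerm (hx0 : 0 ≤ x) (hx1 : x < 1) (u : ℕ) : Summable (durfeeTerm x u) :=
  .of_nonneg_of_le (durfeeTerm_nonneg hx0 hx1 u) (durfeeTerm_le_geometric hx0 hx1 u)
    ((summable_geometric_of_lt_one hx0 hx1).div_const _)

lemma durfeeSum_nonneg (hx0 : 0 ≤ x) (hx1 : x < 1) (u : ℕ) : 0 ≤ durfeeSum x u :=
  tsum_nonneg (durfeeTerm_nonneg hx0 hx1 u)

lemma durfeeSum_le (hx0 : 0 ≤ x) (hx1 : x < 1) (u : ℕ) :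
    durfeeSum x u ≤ (1 - x)⁻¹ / qPochhammerInf x ^ 2 := by
  rw [← tsum_geometric_of_lt_one hx0 hx1, ← tsum_div_const]
  exact (summable_durfeeTerm hx0 hx1 u).tsum_le_tsum (durfeeTerm_le_geometric hx0 hx1 u)
    ((summable_geometric_of_lt_one hx0 hx1).div_const _)

lemma durfeeTerm_zero_sub (hx0 : 0 ≤ x) (hx1 : x < 1) (u : ℕ) :
    durfeeTerm x u 0 - durfeeTerm x (u + 1) 0 = -(x ^ (u + 1) * durfeeTerm x (u + 1) 0) := by
  have hP := (qPochhammer_pos hx0 hx1 u).ne'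
  have hfactor := (one_sub_pow_succ_pos hx0 hx1 u).ne'
  simp only [durfeeTerm, zero_mul, pow_zero, zero_add, qPochhammer_zero, one_mul,
    qPochhammer_succ]
  field_simp
  ring

lemma durfeeTerm_succ_sub (hx0 : 0 ≤ x) (hx1 : x < 1) (u s : ℕ) :
    durfeeTerm x u (s + 1) - durfeeTerm x (u + 1) (s + 1) =
      x ^ (u + 1) * (durfeeTerm x (u + 2) s - durfeeTerm x (u + 1) (s + 1)) := by
  have hA := (qPochhammer_pos hx0 hx1 s).ne'
  have hB := (qPochhammer_pos hx0 hx1 (s + u + 1)).ne'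
  have hw := (one_sub_pow_succ_pos hx0 hx1 s).ne'
  have hwz := (one_sub_pow_succ_pos hx0 hx1 (s + u + 1)).ne'
  have hnum : x ^ ((s + 1) * (s + 1 + u)) = x ^ (s * (s + (u + 2))) * x ^ (u + 1) := by
    rw [← pow_add]; congr 1; ring
  have hnum' : x ^ ((s + 1) * (s + 1 + (u + 1))) =
      x ^ (s * (s + (u + 2))) * x ^ (u + 1) * x ^ (s + 1) := by
    rw [← pow_add, ← pow_add]; congr 1; ring
  simp only [durfeeTerm]
  rw [hnum, hnum']
  generalize x ^ (s * (s + (u + 2))) = e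
  rw [show s + 1 + u = s + u + 1 by ring, show s + 1 + (u + 1) = s + u + 1 + 1 by ring,
    show s + (u + 2) = s + u + 1 + 1 by ring, qPochhammer_succ s, qPochhammer_succ (s + u + 1),
    show s + u + 1 + 1 = (s + 1) + (u + 1) by ring, pow_add x (s + 1) (u + 1)]
  rw [show s + u + 1 + 1 = (s + 1) + (u + 1) by ring, pow_add] at hwz
  generalize x ^ (s + 1) = w at hw hwz ⊢
  generalize x ^ (u + 1) = z at hwz ⊢
  rw [mul_comm] at hwz
  field_simp
  ring

lemma durfeeSum_sub_succ (hx0 : 0 ≤ x) (hx1 : x < 1) (u : ℕ) :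
    durfeeSum x u - durfeeSum x (u + 1) =
      x ^ (u + 1) * (durfeeSum x (u + 2) - durfeeSum x (u + 1)) := by
  have hs := summable_durfeeTerm hx0 hx1
  have hshift := (summable_nat_add_iff 1).2 (hs (u + 1))
  rw [durfeeSum, durfeeSum, durfeeSum, ← (hs u).tsum_sub (hs (u + 1)),
    ((hs u).sub (hs (u + 1))).tsum_eq_zero_add, durfeeTerm_zero_sub hx0 hx1,
    tsum_congr (durfeeTerm_succ_sub hx0 hx1 u), tsum_mul_left, (hs (u + 2)).tsum_sub hshift,
    (hs (u + 1)).tsum_eq_zero_add]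
  ring

lemma durfeeSum_succ (hx0 : 0 ≤ x) (hx1 : x < 1) (u : ℕ) :
    durfeeSum x (u + 1) = durfeeSum x u := by
  have hbound (v : ℕ) :
      |durfeeSum x v - durfeeSum x (v + 1)| ≤ 2 * ((1 - x)⁻¹ / qPochhammerInf x ^ 2) := by
    rw [abs_le]
    constructor <;> linarith [durfeeSum_nonneg hx0 hx1 v, durfeeSum_nonneg hx0 hx1 (v + 1),
      durfeeSum_le hx0 hx1 v, durfeeSum_le hx0 hx1 (v + 1)]
  have hcontract (v : ℕ) : |durfeeSum x v - durfeeSum x (v + 1)| ≤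
      x * |durfeeSum x (v + 1) - durfeeSum x (v + 1 + 1)| := by
    rw [durfeeSum_sub_succ hx0 hx1, abs_mul, abs_of_nonneg (pow_nonneg hx0 _), ← abs_neg,
      neg_sub]
    exact mul_le_mul_of_nonneg_right (pow_le_of_le_one hx0 hx1.le v.succ_ne_zero) (abs_nonneg _)
  have h := eq_zero_of_abs_le_mul_abs_succ (f := fun v => durfeeSum x v - durfeeSum x (v + 1))
    hx0 hx1 hbound hcontract u
  linarith

lemma tendsto_durfeeSum (hx0 : 0 ≤ x) (hx1 : x < 1) :
    Tendsto (durfeeSum x) atTop (𝓝 (qPochhammerInf x)⁻¹) := by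
  have hQ := qPochhammerInf_pos hx0 hx1
  have hlim (r : ℕ) : Tendsto (fun v => durfeeTerm x v r) atTop
      (𝓝 (if r = 0 then (qPochhammerInf x)⁻¹ else 0)) := by
    rcases r with _ | s
    · simpa [durfeeTerm] using (tendsto_qPochhammer hx0 hx1).inv₀ hQ.ne'
    · have hbound (v : ℕ) : durfeeTerm x v (s + 1) ≤ x ^ v / qPochhammerInf x ^ 2 :=
        durfeeTerm_le hx0 hx1 v (s + 1)
          ((Nat.le_add_left v (s + 1)).trans (Nat.le_mul_of_pos_left _ s.succ_pos))
      simpa using squeeze_zero (durfeeTerm_nonneg hx0 hx1 · (s + 1)) hbound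
        (by simpa using (tendsto_pow_atTop_nhds_zero_of_lt_one hx0 hx1).div_const _)
  have h := tendsto_tsum_of_dominated_convergence
    ((summable_geometric_of_lt_one hx0 hx1).div_const (qPochhammerInf x ^ 2)) hlim
    (Eventually.of_forall fun v r => by
      rw [Real.norm_of_nonneg (durfeeTerm_nonneg hx0 hx1 v r)]
      exact durfeeTerm_le_geometric hx0 hx1 v r)
  rwa [tsum_ite_eq] at h

lemma durfeeSum_eq (hx0 : 0 ≤ x) (hx1 : x < 1) (u : ℕ) :
    durfeeSum x u = (qPochhammerInf x)⁻¹ := by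
  have hconst (v : ℕ) : durfeeSum x v = durfeeSum x 0 := by
    induction v with
    | zero => rfl
    | succ v ih => rw [durfeeSum_succ hx0 hx1, ih]
  have h := tendsto_durfeeSum hx0 hx1
  rw [funext hconst] at h
  rw [hconst u]
  exact tendsto_nhds_unique tendsto_const_nhds h

end CohenLenstra

open CohenLenstra

lemma cohenLenstraAlpha_eq {p : ℕ} (hp : 1 < p) (u r : ℕ) :
    cohenLenstraAlpha p u r = qPochhammerInf (p : ℝ)⁻¹ * durfeeTerm (p : ℝ)⁻¹ u r := by
  have hx0 : (0 : ℝ) ≤ (p : ℝ)⁻¹ := by positivity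
  have hx1 : (p : ℝ)⁻¹ < 1 := inv_lt_one_of_one_lt₀ (by exact_mod_cast hp)
  have hP := (qPochhammer_pos hx0 hx1 r).ne'
  have hP' := (qPochhammer_pos hx0 hx1 (r + u)).ne'
  have htail := eq_div_of_mul_eq hP
    ((mul_comm _ _).trans (qPochhammer_mul_tprod_tail hx0 hx1 r))
  rw [cohenLenstraAlpha, htail, durfeeTerm, add_comm u r, inv_pow]
  change _ / (_ * qPochhammer _ _) = _
  field_simp

/-- For every prime `p` and `u ≥ 0`, `∑_{r=0}^∞ α_{p,u,r} = 1`. -/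
theorem tsum_cohenLenstraAlpha (p : ℕ) (hp : p.Prime) (u : ℕ) :
    ∑' r : ℕ, cohenLenstraAlpha p u r = 1 := by
  have hx0 : (0 : ℝ) ≤ (p : ℝ)⁻¹ := by positivity
  have hx1 : (p : ℝ)⁻¹ < 1 := inv_lt_one_of_one_lt₀ (by exact_mod_cast hp.one_lt)
  simp_rw [cohenLenstraAlpha_eq hp.one_lt]
  rw [tsum_mul_left, ← durfeeSum, durfeeSum_eq hx0 hx1,
    mul_inv_cancel₀ (qPochhammerInf_pos hx0 hx1).ne']
end

section
/- For every prime p and integer u ≥ 0, the constants α_{p,u,r} satisfy ∑_{r=0}^∞ p^r · α_{p,u,r} = 1 + p^{−u}. -/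
open Finset Filter Real Topology

namespace CLaux

variable {q : ℝ}


noncomputable def Bq (q : ℝ) (n : ℕ) : ℝ := ∏ i ∈ Finset.range n, (1 - q ^ (i + 1))

noncomputable def Pq (q : ℝ) : ℝ := ∏' i : ℕ, (1 - q ^ (i + 1))

noncomputable def Lq (q : ℝ) : ℝ := ∑' i : ℕ, Real.log (1 - q ^ (i + 1))

noncomputable def cq (q : ℝ) (u r : ℕ) : ℝ := q ^ (r * (r + u)) / (Bq q r * Bq q (r + u))

noncomputable def Dq (q : ℝ) (u : ℕ) : ℝ := ∑' r, cq q u r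

variable {q : ℝ}

lemma hq1 (hq0 : 0 < q) (hq2 : q ≤ 1/2) : q < 1 := by linarith

lemma one_sub_pow_pos (hq0 : 0 < q) (hq2 : q ≤ 1/2) (i : ℕ) : 0 < 1 - q ^ (i + 1) := by
  have : q ^ (i+1) < 1 := pow_lt_one₀ hq0.le (hq1 hq0 hq2) (by omega)
  linarith

lemma Bq_pos (hq0 : 0 < q) (hq2 : q ≤ 1/2) (n : ℕ) : 0 < Bq q n :=
  Finset.prod_pos fun i _ => one_sub_pow_pos hq0 hq2 i

lemma Bq_succ (n : ℕ) : Bq q (n + 1) = Bq q n * (1 - q ^ (n + 1)) :=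
  Finset.prod_range_succ _ _

lemma one_sub_sum_le_prod (a : ℕ → ℝ) (h0 : ∀ i, 0 ≤ a i) (h1 : ∀ i, a i ≤ 1) (n : ℕ) :
    1 - ∑ i ∈ Finset.range n, a i ≤ ∏ i ∈ Finset.range n, (1 - a i) := by
  induction n with
  | zero => simp
  | succ n ih =>
    rw [Finset.prod_range_succ, Finset.sum_range_succ]
    have hpn : 0 ≤ ∏ i ∈ Finset.range n, (1 - a i) :=
      Finset.prod_nonneg fun i _ => by linarith [h1 i]
    have hsum : 0 ≤ ∑ i ∈ Finset.range n, a i :=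
      Finset.sum_nonneg fun i _ => h0 i
    rcases le_or_gt (1 - ∑ i ∈ Finset.range n, a i) 0 with h | h
    · nlinarith [h0 n, h1 n, hpn]
    · nlinarith [h0 n, h1 n, hpn,
        mul_le_mul_of_nonneg_right ih (by linarith [h1 n] : (0:ℝ) ≤ 1 - a n)]

lemma geom_sum_le' (hq0 : 0 < q) (hq2 : q ≤ 1/2) (n : ℕ) :
    ∑ i ∈ Finset.range n, q ^ i ≤ (1 - q)⁻¹ := by
  have h1 : q < 1 := hq1 hq0 hq2
  have hz : (0:ℝ) < 1 - q := by linarith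
  have hpow : (0:ℝ) < q ^ n := pow_pos hq0 n
  calc ∑ i ∈ Finset.range n, q ^ i = (q ^ n - 1)/(q - 1) := geom_sum_eq h1.ne n
    _ = (1 - q ^ n)/(1 - q) := by rw [← neg_div_neg_eq]; ring_nf
    _ ≤ 1/(1 - q) := by gcongr; linarith
    _ = (1 - q)⁻¹ := one_div _

lemma Kq_le_Bq (hq0 : 0 < q) (hq2 : q ≤ 1/2) (n : ℕ) : (1 - q)/2 ≤ Bq q n := by
  have h1 : q < 1 := hq1 hq0 hq2
  cases n with
  | zero => simp [Bq]; linarith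
  | succ m =>
    have hsplit : Bq q (m + 1) = (1 - q) * ∏ i ∈ Finset.range m, (1 - q ^ (i + 2)) := by
      rw [Bq, Finset.prod_range_succ']
      rw [mul_comm]
      norm_num
    rw [hsplit]
    have hbound : (1:ℝ) - q^2 * (1-q)⁻¹ ≤ ∏ i ∈ Finset.range m, (1 - q ^ (i + 2)) := by
      have h := one_sub_sum_le_prod (fun i => q ^ (i + 2))
        (fun i => by positivity)
        (fun i => pow_le_one₀ hq0.le h1.le) m
      refine le_trans ?_ h
      have hs : ∑ i ∈ Finset.range m, q ^ (i + 2) ≤ q^2 * (1-q)⁻¹ := by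
        have he : ∑ i ∈ Finset.range m, q ^ (i + 2) = q^2 * ∑ i ∈ Finset.range m, q ^ i := by
          rw [Finset.mul_sum]; exact Finset.sum_congr rfl fun i _ => by ring
        rw [he]
        exact mul_le_mul_of_nonneg_left (geom_sum_le' hq0 hq2 m) (by positivity)
      linarith
    have h3 : (1-q)⁻¹ ≤ 2 := by
      rw [show (2:ℝ) = (1/2)⁻¹ by norm_num]
      exact inv_anti₀ (by norm_num) (by linarith)
    have h4 : q^2*(1-q)⁻¹ ≤ 2*q^2 := by nlinarith [sq_nonneg q, pow_pos hq0 2]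
    have h6 : (1/2:ℝ) ≤ ∏ i ∈ Finset.range m, (1 - q ^ (i + 2)) := by nlinarith
    calc (1-q)/2 = (1-q)*(1/2) := by ring
      _ ≤ (1-q)*∏ i ∈ Finset.range m, (1 - q ^ (i + 2)) :=
          mul_le_mul_of_nonneg_left h6 (by linarith)



lemma summable_log (hq0 : 0 < q) (hq2 : q ≤ 1/2) :
    Summable (fun i : ℕ => Real.log (1 - q ^ (i + 1))) := by
  have h1 : q < 1 := hq1 hq0 hq2
  apply Summable.of_abs
  have hgeo : Summable (fun i : ℕ => 2 * q ^ (i+1)) := by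
    have : Summable (fun i : ℕ => (2*q) * q ^ i) :=
      (summable_geometric_of_lt_one hq0.le h1).mul_left _
    exact this.congr fun i => by ring
  refine Summable.of_nonneg_of_le (fun i => abs_nonneg _) (fun i => ?_) hgeo
  · -- bound
    set x := q ^ (i + 1) with hx
    have hx0 : 0 < x := pow_pos hq0 _
    have hxh : x ≤ 1/2 := by
      calc x ≤ q ^ 1 := pow_le_pow_of_le_one hq0.le h1.le (by omega)
        _ ≤ 1/2 := by simpa using hq2
    have hpos : 0 < 1 - x := by linarith
    have hle : Real.log (1 - x) ≤ 0 := Real.log_nonpos (by linarith) (by linarith)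
    rw [abs_of_nonpos hle, ← Real.log_inv]
    have := Real.log_le_sub_one_of_pos (inv_pos.mpr hpos)
    have h2 : (1 - x)⁻¹ - 1 ≤ 2 * x := by
      rw [inv_eq_one_div, div_sub' hpos.ne']
      rw [div_le_iff₀ hpos]
      nlinarith
    linarith

lemma hasProd_Pq (hq0 : 0 < q) (hq2 : q ≤ 1/2) :
    HasProd (fun i : ℕ => 1 - q ^ (i + 1)) (Real.exp (Lq q)) :=
  ((summable_log hq0 hq2).hasSum.rexp).congr_fun fun i =>
    (Real.exp_log (one_sub_pow_pos hq0 hq2 i)).symm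

lemma Pq_eq (hq0 : 0 < q) (hq2 : q ≤ 1/2) : Pq q = Real.exp (Lq q) :=
  (hasProd_Pq hq0 hq2).tprod_eq

lemma Pq_pos (hq0 : 0 < q) (hq2 : q ≤ 1/2) : 0 < Pq q := by
  rw [Pq_eq hq0 hq2]; exact Real.exp_pos _

lemma tendsto_Bq (hq0 : 0 < q) (hq2 : q ≤ 1/2) :
    Tendsto (Bq q) atTop (𝓝 (Pq q)) := by
  rw [Pq_eq hq0 hq2]
  exact (hasProd_Pq hq0 hq2).tendsto_prod_nat

lemma exp_partial (hq0 : 0 < q) (hq2 : q ≤ 1/2) (r : ℕ) :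
    Real.exp (∑ i ∈ Finset.range r, Real.log (1 - q ^ (i + 1))) = Bq q r := by
  rw [Real.exp_sum]
  exact Finset.prod_congr rfl fun i _ => Real.exp_log (one_sub_pow_pos hq0 hq2 i)

lemma tprod_shift (hq0 : 0 < q) (hq2 : q ≤ 1/2) (r : ℕ) :
    (∏' i : ℕ, (1 - q ^ (r + 1 + i))) = Pq q / Bq q r := by
  set g : ℕ → ℝ := fun i => Real.log (1 - q ^ (i + 1)) with hg
  have hsumg : Summable g := summable_log hq0 hq2
  have hshift : Summable fun i => g (i + r) := (summable_nat_add_iff r).2 hsumg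
  have hval : ∑' i, g (i + r) = Lq q - ∑ i ∈ Finset.range r, g i := by
    have := hsumg.sum_add_tsum_nat_add r
    rw [Lq]; linarith [this]
  have hs : HasSum (fun i => g (i + r)) (Lq q - ∑ i ∈ Finset.range r, g i) := by
    rw [← hval]; exact hshift.hasSum
  have hp := hs.rexp
  have hp2 : HasProd (fun i : ℕ => 1 - q ^ (r + 1 + i))
      (Real.exp (Lq q - ∑ i ∈ Finset.range r, g i)) := by
    refine hp.congr_fun fun i => ?_
    show _ = Real.exp (g (i + r))
    rw [hg, Real.exp_log (one_sub_pow_pos hq0 hq2 (i + r))]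
    congr 2
    omega
  rw [hp2.tprod_eq, Real.exp_sub, exp_partial hq0 hq2, ← Pq_eq hq0 hq2]



lemma Bq_zero : Bq q 0 = 1 := by simp [Bq]

lemma cq_nonneg (hq0 : 0 < q) (hq2 : q ≤ 1/2) (u r : ℕ) : 0 ≤ cq q u r := by
  have h1 := Bq_pos hq0 hq2 r
  have h2 := Bq_pos hq0 hq2 (r + u)
  have h3 : (0:ℝ) < q ^ (r * (r+u)) := pow_pos hq0 _
  unfold cq
  positivity

lemma Kq_pos (hq0 : 0 < q) (hq2 : q ≤ 1/2) : (0:ℝ) < (1 - q)/2 := by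
  have := hq1 hq0 hq2; linarith

lemma cq_le (hq0 : 0 < q) (hq2 : q ≤ 1/2) (u r : ℕ) :
    cq q u r ≤ q ^ r / ((1 - q)/2)^2 := by
  have hK := Kq_pos hq0 hq2
  have h1 := hq1 hq0 hq2
  apply div_le_div₀ (by positivity)
  · apply pow_le_pow_of_le_one hq0.le h1.le
    rcases Nat.eq_zero_or_pos r with h | h
    · simp [h]
    · calc r = r * 1 := (mul_one r).symm
        _ ≤ r * (r + u) := Nat.mul_le_mul_left r (by omega)
  · positivity
  · calc ((1-q)/2)^2 = ((1-q)/2) * ((1-q)/2) := sq _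
      _ ≤ Bq q r * Bq q (r + u) :=
        mul_le_mul (Kq_le_Bq hq0 hq2 r) (Kq_le_Bq hq0 hq2 (r+u)) hK.le (Bq_pos hq0 hq2 r).le

lemma summable_bound (hq0 : 0 < q) (hq2 : q ≤ 1/2) :
    Summable (fun r : ℕ => q ^ r / ((1 - q)/2)^2) :=
  (summable_geometric_of_lt_one hq0.le (hq1 hq0 hq2)).div_const _

lemma summable_cq (hq0 : 0 < q) (hq2 : q ≤ 1/2) (u : ℕ) : Summable (cq q u) :=
  Summable.of_nonneg_of_le (cq_nonneg hq0 hq2 u) (cq_le hq0 hq2 u) (summable_bound hq0 hq2)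

lemma Dq_nonneg (hq0 : 0 < q) (hq2 : q ≤ 1/2) (u : ℕ) : 0 ≤ Dq q u :=
  tsum_nonneg (cq_nonneg hq0 hq2 u)

lemma Dq_le (hq0 : 0 < q) (hq2 : q ≤ 1/2) (u : ℕ) :
    Dq q u ≤ (1 - q)⁻¹ / ((1 - q)/2)^2 := by
  have h := Summable.tsum_le_tsum (cq_le hq0 hq2 u) (summable_cq hq0 hq2 u) (summable_bound hq0 hq2)
  calc Dq q u ≤ ∑' r : ℕ, q ^ r / ((1 - q)/2)^2 := h
    _ = (∑' r : ℕ, q ^ r) / ((1 - q)/2)^2 := by rw [tsum_div_const]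
    _ = (1 - q)⁻¹ / ((1 - q)/2)^2 := by rw [tsum_geometric_of_lt_one hq0.le (hq1 hq0 hq2)]

lemma key_pointwise (hq0 : 0 < q) (hq2 : q ≤ 1/2) (u s : ℕ) :
    cq q u (s+1) + q^(u+1) * cq q (u+1) (s+1)
      = cq q (u+1) (s+1) + q^(u+1) * cq q (u+2) s := by
  have hBs := Bq_pos hq0 hq2 s
  have hBm := Bq_pos hq0 hq2 (s+u+1)
  have h1 := one_sub_pow_pos hq0 hq2 s       -- 0 < 1 - q^(s+1)
  have h2 := one_sub_pow_pos hq0 hq2 (s+u+1) -- 0 < 1 - q^(s+u+2)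
  have e1 : Bq q (s+1) = Bq q s * (1 - q^(s+1)) := Bq_succ s
  have e2 : Bq q (s+u+2) = Bq q (s+u+1) * (1 - q^(s+u+2)) := Bq_succ (s+u+1)
  simp only [cq]
  rw [show s+1+(u+1) = s+u+2 from by omega, show s+1+u = s+u+1 from by omega,
    show s+(u+2) = s+u+2 from by omega]
  rw [e1, e2]
  rw [show (s+1)*(s+u+1) = s*s+s*u+2*s+u+1 from by ring,
    show (s+1)*(s+u+2) = s*s+s*u+3*s+u+2 from by ring,
    show s*(s+u+2) = s*s+s*u+2*s from by ring,
    show s+u+2 = s+(u+2) from by omega]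
  have ha : Bq q s ≠ 0 := hBs.ne'
  have hb : Bq q (s+u+1) ≠ 0 := hBm.ne'
  have hx : (1 - q^(s+1)) ≠ 0 := h1.ne'
  have hy : (1 - q^(s+(u+2))) ≠ 0 := by
    rw [show s+(u+2) = s+u+1+1 from by omega]; exact h2.ne'
  field_simp
  ring

lemma cq_zero (hq0 : 0 < q) (hq2 : q ≤ 1/2) (u : ℕ) : cq q u 0 = (Bq q u)⁻¹ := by
  simp [cq, Bq_zero]

lemma head_pointwise (hq0 : 0 < q) (hq2 : q ≤ 1/2) (u : ℕ) :
    cq q u 0 + q^(u+1) * cq q (u+1) 0 = cq q (u+1) 0 := by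
  rw [cq_zero hq0 hq2, cq_zero hq0 hq2, Bq_succ u]
  have ha : Bq q u ≠ 0 := (Bq_pos hq0 hq2 u).ne'
  have hx : (1 - q^(u+1)) ≠ 0 := (one_sub_pow_pos hq0 hq2 u).ne'
  field_simp
  ring

lemma Dq_rec (hq0 : 0 < q) (hq2 : q ≤ 1/2) (u : ℕ) :
    Dq q u + q^(u+1) * Dq q (u+1) = Dq q (u+1) + q^(u+1) * Dq q (u+2) := by
  have S1 := summable_cq hq0 hq2 u
  have S2 := summable_cq hq0 hq2 (u+1)
  have S3 := summable_cq hq0 hq2 (u+2)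
  have S2' : Summable (fun s : ℕ => cq q (u+1) (s+1)) := (summable_nat_add_iff 1).2 S2
  have hf : Summable (fun r => cq q u r + q^(u+1) * cq q (u+1) r) :=
    S1.add (S2.mul_left _)
  calc Dq q u + q^(u+1) * Dq q (u+1)
      = ∑' r, (cq q u r + q^(u+1) * cq q (u+1) r) := by
        rw [Summable.tsum_add S1 (S2.mul_left _), tsum_mul_left]; rfl
    _ = (cq q u 0 + q^(u+1) * cq q (u+1) 0)
          + ∑' s, (cq q u (s+1) + q^(u+1) * cq q (u+1) (s+1)) := Summable.tsum_eq_zero_add hf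
    _ = cq q (u+1) 0 + ∑' s, (cq q (u+1) (s+1) + q^(u+1) * cq q (u+2) s) := by
        rw [head_pointwise hq0 hq2 u]
        congr 1
        exact tsum_congr fun s => key_pointwise hq0 hq2 u s
    _ = cq q (u+1) 0 + (∑' s, cq q (u+1) (s+1) + q^(u+1) * ∑' s, cq q (u+2) s) := by
        rw [Summable.tsum_add S2' (S3.mul_left _), tsum_mul_left]
    _ = Dq q (u+1) + q^(u+1) * Dq q (u+2) := by
        have hD : Dq q (u+1) = cq q (u+1) 0 + ∑' s, cq q (u+1) (s+1) := Summable.tsum_eq_zero_add S2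
        have hD2 : Dq q (u+2) = ∑' s, cq q (u+2) s := rfl
        rw [hD, hD2]; ring

lemma Dq_diff_bound (hq0 : 0 < q) (hq2 : q ≤ 1/2) :
    ∀ n u : ℕ, |Dq q u - Dq q (u+1)| ≤ q ^ n * (2 * ((1 - q)⁻¹ / ((1 - q)/2)^2)) := by
  intro n
  induction n with
  | zero =>
    intro u
    set M := (1 - q)⁻¹ / ((1 - q)/2)^2
    have h1 := Dq_nonneg hq0 hq2 u
    have h2 := Dq_nonneg hq0 hq2 (u+1)
    have h3 := Dq_le hq0 hq2 u
    have h4 := Dq_le hq0 hq2 (u+1)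
    rw [pow_zero, one_mul, abs_sub_le_iff]
    constructor <;> linarith
  | succ n ih =>
    intro u
    have hrec := Dq_rec hq0 hq2 u
    have heq : Dq q u - Dq q (u+1) = q^(u+1) * (Dq q (u+2) - Dq q (u+1)) := by linarith
    rw [heq, abs_mul, abs_of_nonneg (by positivity : (0:ℝ) ≤ q^(u+1))]
    have hq' : q^(u+1) ≤ q := by
      calc q^(u+1) ≤ q^1 := pow_le_pow_of_le_one hq0.le (hq1 hq0 hq2).le (by omega)
        _ = q := pow_one q
    have := ih (u+1)
    rw [abs_sub_comm] at this
    calc q^(u+1) * |Dq q (u+2) - Dq q (u+1)|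
        ≤ q * (q ^ n * (2 * ((1 - q)⁻¹ / ((1 - q)/2)^2))) := by
          apply mul_le_mul hq' this (abs_nonneg _) hq0.le
      _ = q ^ (n+1) * (2 * ((1 - q)⁻¹ / ((1 - q)/2)^2)) := by ring

lemma Dq_succ_eq (hq0 : 0 < q) (hq2 : q ≤ 1/2) (u : ℕ) : Dq q u = Dq q (u+1) := by
  have h0 : Tendsto (fun n : ℕ => q ^ n * (2 * ((1 - q)⁻¹ / ((1 - q)/2)^2)))
      atTop (𝓝 0) := by
    simpa using
      (tendsto_pow_atTop_nhds_zero_of_lt_one hq0.le (hq1 hq0 hq2)).mul_const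
        (2 * ((1 - q)⁻¹ / ((1 - q)/2)^2))
  have hle : |Dq q u - Dq q (u+1)| ≤ 0 :=
    ge_of_tendsto' h0 (fun n => Dq_diff_bound hq0 hq2 n u)
  have := abs_nonneg (Dq q u - Dq q (u+1))
  have : |Dq q u - Dq q (u+1)| = 0 := le_antisymm hle this
  have := abs_eq_zero.mp this
  linarith

lemma Dq_eq_zero' (hq0 : 0 < q) (hq2 : q ≤ 1/2) (u : ℕ) : Dq q u = Dq q 0 := by
  induction u with
  | zero => rfl
  | succ n ih => rw [← Dq_succ_eq hq0 hq2 n, ih]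

lemma tendsto_tail (hq0 : 0 < q) (hq2 : q ≤ 1/2) :
    Tendsto (fun u : ℕ => ∑' s : ℕ, cq q u (s+1)) atTop (𝓝 0) := by
  set K := ((1 - q)/2) with hK
  have hKpos := Kq_pos hq0 hq2
  have h1 := hq1 hq0 hq2
  apply squeeze_zero (fun u => tsum_nonneg fun s => cq_nonneg hq0 hq2 u (s+1))
    (g := fun u => q^(u+1) * ((1 - q)⁻¹ / K^2))
  · intro u
    have hsum1 : Summable (fun s : ℕ => cq q u (s+1)) :=
      (summable_nat_add_iff 1).2 (summable_cq hq0 hq2 u)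
    have hsum2 : Summable (fun s : ℕ => q^(u+1) * (q ^ s / K^2)) :=
      ((summable_geometric_of_lt_one hq0.le h1).div_const _).mul_left _
    have hbd : ∀ s : ℕ, cq q u (s+1) ≤ q^(u+1) * (q ^ s / K^2) := by
      intro s
      have : cq q u (s+1) ≤ q ^ ((s+1)*((s+1)+u)) / K^2 := by
        rw [cq]
        apply div_le_div₀ (by positivity) (le_refl _) (by positivity)
        calc K^2 = K * K := sq K
          _ ≤ Bq q (s+1) * Bq q ((s+1) + u) :=
            mul_le_mul (Kq_le_Bq hq0 hq2 _) (Kq_le_Bq hq0 hq2 _) hKpos.le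
              (Bq_pos hq0 hq2 _).le
      refine le_trans this ?_
      rw [show q^(u+1) * (q ^ s / K^2) = q^(u+1+s) / K^2 from by rw [pow_add]; ring]
      apply div_le_div₀ (by positivity) ?_ (by positivity) (le_refl _)
      apply pow_le_pow_of_le_one hq0.le h1.le
      calc u+1+s ≤ (s+1)+(s+1)*u := by nlinarith
        _ ≤ (s+1)*((s+1)+u) := by nlinarith
    calc ∑' s, cq q u (s+1) ≤ ∑' s : ℕ, q^(u+1) * (q ^ s / K^2) :=
          Summable.tsum_le_tsum hbd hsum1 hsum2
      _ = q^(u+1) * ((∑' s : ℕ, q ^ s) / K^2) := by rw [tsum_mul_left, tsum_div_const]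
      _ = q^(u+1) * ((1 - q)⁻¹ / K^2) := by
          rw [tsum_geometric_of_lt_one hq0.le h1]
  · have := (tendsto_pow_atTop_nhds_zero_of_lt_one hq0.le h1).mul_const
      (q * ((1 - q)⁻¹ / K^2))
    simp only [zero_mul] at this
    refine this.congr fun u => ?_
    rw [pow_succ]; ring

lemma Dq_head (hq0 : 0 < q) (hq2 : q ≤ 1/2) (u : ℕ) :
    Dq q u = (Bq q u)⁻¹ + ∑' s : ℕ, cq q u (s+1) := by
  rw [Dq, Summable.tsum_eq_zero_add (summable_cq hq0 hq2 u), cq_zero hq0 hq2]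

lemma Dq_zero_eq (hq0 : 0 < q) (hq2 : q ≤ 1/2) : Dq q 0 = (Pq q)⁻¹ := by
  have hlim : Tendsto (fun u : ℕ => Dq q u) atTop (𝓝 ((Pq q)⁻¹)) := by
    have h1 : Tendsto (fun u : ℕ => (Bq q u)⁻¹) atTop (𝓝 ((Pq q)⁻¹)) :=
      (tendsto_Bq hq0 hq2).inv₀ (Pq_pos hq0 hq2).ne'
    have := h1.add (tendsto_tail hq0 hq2)
    rw [add_zero] at this
    exact this.congr fun u => (Dq_head hq0 hq2 u).symm
  have hconst : Tendsto (fun _ : ℕ => Dq q 0) atTop (𝓝 (Dq q 0)) := tendsto_const_nhds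
  have : Tendsto (fun u : ℕ => Dq q u) atTop (𝓝 (Dq q 0)) := by
    refine hconst.congr fun u => (Dq_eq_zero' hq0 hq2 u).symm
  exact tendsto_nhds_unique this hlim

lemma Dq_eq (hq0 : 0 < q) (hq2 : q ≤ 1/2) (u : ℕ) : Dq q u = (Pq q)⁻¹ := by
  rw [Dq_eq_zero' hq0 hq2 u, Dq_zero_eq hq0 hq2]


end CLaux

open CLaux

/-- For every prime `p` and `u ≥ 0`, `∑_{r=0}^∞ p^r · α_{p,u,r} = 1 + p^{−u}`. -/
theorem tsum_pow_mul_cohenLenstraAlpha (p : ℕ) (hp : p.Prime) (u : ℕ) :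
    ∑' r : ℕ, (p : ℝ) ^ r * cohenLenstraAlpha p u r = 1 + ((p : ℝ))⁻¹ ^ u := by
  have hp2 : 2 ≤ p := hp.two_le
  have hpR : (2:ℝ) ≤ (p:ℝ) := by exact_mod_cast hp2
  have hp0 : (0:ℝ) < (p:ℝ) := by linarith
  set q : ℝ := ((p : ℝ))⁻¹ with hqdef
  have hq0 : 0 < q := inv_pos.mpr hp0
  have hq2 : q ≤ 1/2 := by
    rw [hqdef, show (1:ℝ)/2 = 2⁻¹ by norm_num]
    exact inv_anti₀ (by norm_num) hpR
  have hqne : q ≠ 0 := hq0.ne'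
  have hpq : (p:ℝ) = q⁻¹ := by rw [hqdef, inv_inv]
  have hterm : ∀ u r : ℕ, cohenLenstraAlpha p u r
      = (Pq q / Bq q r) / ((q⁻¹) ^ (r * (u + r)) * Bq q (r + u)) := by
    intro u r
    rw [cohenLenstraAlpha, tprod_shift hq0 hq2 r, hpq, inv_inv]
    rfl
  have hPne : Pq q ≠ 0 := (Pq_pos hq0 hq2).ne'
  cases u with
  | succ v =>
    have hptw : ∀ r : ℕ, (p:ℝ)^r * cohenLenstraAlpha p (v+1) r
        = Pq q * (cq q v r + q^(v+1) * cq q (v+1) r) := by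
      intro r
      rw [hterm, hpq]
      have hBr := Bq_pos hq0 hq2 r
      have hBrv := Bq_pos hq0 hq2 (r+v)
      have h1 := one_sub_pow_pos hq0 hq2 (r+v)
      simp only [cq]
      rw [show r+(v+1) = (r+v)+1 from by omega, Bq_succ (r+v)]
      rw [show r*(v+1+r) = r*r+r*v+r from by ring,
        show r*(r+v) = r*r+r*v from by ring,
        show r*((r+v)+1) = r*r+r*v+r from by ring]
      simp only [inv_pow]
      field_simp
      ring
    calc ∑' r : ℕ, (p:ℝ)^r * cohenLenstraAlpha p (v+1) r
        = ∑' r : ℕ, Pq q * (cq q v r + q^(v+1) * cq q (v+1) r) := tsum_congr hptw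
      _ = Pq q * (Dq q v + q^(v+1) * Dq q (v+1)) := by
          rw [tsum_mul_left, Summable.tsum_add (summable_cq hq0 hq2 v)
            ((summable_cq hq0 hq2 (v+1)).mul_left _), tsum_mul_left]
          rfl
      _ = 1 + q ^ (v+1) := by
          rw [Dq_eq hq0 hq2, Dq_eq hq0 hq2]
          field_simp
  | zero =>
    set f : ℕ → ℝ := fun r => (p:ℝ)^r * cohenLenstraAlpha p 0 r with hf
    have hf0 : f 0 = Pq q := by
      rw [hf]
      simp only [pow_zero, one_mul]
      rw [hterm, Bq_zero]
      norm_num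
    have hpt0 : ∀ s : ℕ, f (s+1) = Pq q * (cq q 1 s + cq q 0 (s+1)) := by
      intro s
      rw [hf]
      simp only
      rw [hterm, hpq]
      have hBs := Bq_pos hq0 hq2 s
      have h1 := one_sub_pow_pos hq0 hq2 s
      simp only [cq]
      rw [Bq_succ s]
      rw [show (s+1)*(0+(s+1)) = s*s+2*s+1 from by ring,
        show s*(s+1) = s*s+s from by ring,
        show (s+1)*((s+1)+0) = s*s+2*s+1 from by ring]
      simp only [inv_pow]
      field_simp
      ring
    have hsum1 : Summable (fun s : ℕ => f (s+1)) := by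
      apply Summable.congr (f := fun s => Pq q * (cq q 1 s + cq q 0 (s+1)))
      · exact (((summable_cq hq0 hq2 1).add
          ((summable_nat_add_iff 1).2 (summable_cq hq0 hq2 0))).mul_left _)
      · exact fun s => (hpt0 s).symm
    have hsum : Summable f := (summable_nat_add_iff 1).1 hsum1
    have htail : ∑' s : ℕ, cq q 0 (s+1) = Dq q 0 - 1 := by
      have := Summable.tsum_eq_zero_add (summable_cq hq0 hq2 0)
      have hc00 : cq q 0 0 = 1 := by simp [cq, Bq_zero]
      have hD : Dq q 0 = cq q 0 0 + ∑' s, cq q 0 (s+1) := this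
      rw [hc00] at hD
      linarith
    calc ∑' r : ℕ, (p:ℝ)^r * cohenLenstraAlpha p 0 r
        = f 0 + ∑' s : ℕ, f (s+1) := Summable.tsum_eq_zero_add hsum
      _ = Pq q + ∑' s : ℕ, Pq q * (cq q 1 s + cq q 0 (s+1)) := by
          rw [hf0]; exact congrArg _ (tsum_congr hpt0)
      _ = Pq q + Pq q * (Dq q 1 + (Dq q 0 - 1)) := by
          rw [tsum_mul_left, Summable.tsum_add (summable_cq hq0 hq2 1)
            ((summable_nat_add_iff 1).2 (summable_cq hq0 hq2 0)), htail]
          rfl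
      _ = 1 + q ^ 0 := by
          rw [Dq_eq hq0 hq2, Dq_eq hq0 hq2]
          field_simp
          ring
end

section
/- Let F be a number field and i ≥ 1. Define μ^{(i)}(F) as the group of roots of unity ζ in an algebraic closure of F such that σ^i ζ = ζ for all σ ∈ Gal(F̄/F). Then μ^{(i)}(F) is finite. -/
/-! Let `ζ` have order `n` and let `χ : Gal(F̄/F) →* (ZMod n)ˣ` record the exponent by which
each automorphism acts on `ζ`. The hypothesis says that the image `H` of `χ` has exponent
dividing `i`. Since `|H| = [F(ζ) : F] ≥ φ(n) / d` with `d = [F : ℚ]`, the index of `H` is at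
most `d`, so every unit `a` modulo `n` satisfies `a ^ (d! * i) = 1`. Testing this on `3` modulo
the `2`-part of `n` and on `2` modulo its odd part gives `n ≤ 6 ^ (d! * i)`, so every such `ζ`
is a root of `X ^ N - 1` for one fixed `N`. -/

open Polynomial Module

namespace ZMod

lemma le_pow_of_natCast_pow_eq_one {q c m : ℕ} (hc : 2 ≤ c) (hm : m ≠ 0)
    (h : (c : ZMod q) ^ m = 1) : q ≤ c ^ m := by
  have hcm : 2 ≤ c ^ m := hc.trans (le_self_pow₀ (by omega) hm)
  have hdvd : q ∣ c ^ m - 1 := by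
    rw [← ZMod.natCast_eq_zero_iff, Nat.cast_sub (by omega), Nat.cast_pow, h, Nat.cast_one,
      sub_self]
  have := Nat.le_of_dvd (by omega) hdvd
  omega

lemma natCast_pow_eq_one_of_dvd {n q m c : ℕ} [NeZero n] (h : ∀ a : (ZMod n)ˣ, a ^ m = 1)
    (hq : q ∣ n) (hc : c.Coprime q) : (c : ZMod q) ^ m = 1 := by
  obtain ⟨a, ha⟩ := ZMod.unitsMap_surjective hq (ZMod.unitOfCoprime c hc)
  have hc' : unitOfCoprime c hc ^ m = 1 := by rw [← ha, ← map_pow, h a, map_one]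
  simpa using congrArg Units.val hc'

theorem le_six_pow_of_forall_units_pow_eq_one {n m : ℕ} (hm : m ≠ 0)
    (h : ∀ a : (ZMod n)ˣ, a ^ m = 1) : n ≤ 6 ^ m := by
  rcases eq_or_ne n 0 with rfl | hn
  · exact Nat.zero_le _
  have : NeZero n := ⟨hn⟩
  have hodd : ordCompl[2] n ≤ 2 ^ m :=
    le_pow_of_natCast_pow_eq_one le_rfl hm <| natCast_pow_eq_one_of_dvd h (Nat.ordCompl_dvd n 2) <|
      Nat.prime_two.coprime_iff_not_dvd.mpr (Nat.not_dvd_ordCompl Nat.prime_two hn)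
  have heven : ordProj[2] n ≤ 3 ^ m :=
    le_pow_of_natCast_pow_eq_one (by norm_num) hm <| natCast_pow_eq_one_of_dvd h
      (Nat.ordProj_dvd n 2) (Nat.Coprime.pow_right _ (by norm_num))
  calc n = ordProj[2] n * ordCompl[2] n := (Nat.ordProj_mul_ordCompl_eq_self n 2).symm
    _ ≤ 3 ^ m * 2 ^ m := Nat.mul_le_mul heven hodd
    _ = 6 ^ m := by rw [← Nat.mul_pow]

end ZMod

theorem Subgroup.pow_factorial_mem {G : Type*} [Group G] (H : Subgroup G) [H.Normal]
    [H.FiniteIndex] {d : ℕ} (hd : H.index ≤ d) (g : G) : g ^ d.factorial ∈ H := by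
  obtain ⟨k, hk⟩ := Nat.dvd_factorial (Nat.pos_of_ne_zero H.index_ne_zero_of_finite) hd
  rw [hk, pow_mul]
  exact H.pow_mem (H.pow_index_mem g) k

theorem minpoly.natDegree_le_finrank_mul_natDegree (K : Type*) {F L : Type*} [Field K] [Field F]
    [Field L] [Algebra K F] [Algebra F L] [Algebra K L] [IsScalarTower K F L]
    [FiniteDimensional K F] {x : L} (hx : IsIntegral F x) :
    (minpoly K x).natDegree ≤ finrank K F * (minpoly F x).natDegree := by
  let E := IntermediateField.adjoin F {x}
  have : FiniteDimensional F E := IntermediateField.adjoin.finiteDimensional hx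
  have : FiniteDimensional K E := FiniteDimensional.trans K F E
  have : IsScalarTower K E L :=
    ⟨fun k e l => by
      change ((k • e : E) : L) * l = k • ((e : L) * l)
      rw [IntermediateField.coe_smul, smul_mul_assoc]⟩
  let y : E := IntermediateField.AdjoinSimple.gen F x
  calc (minpoly K x).natDegree = (minpoly K y).natDegree := by
        rw [← minpoly.algebraMap_eq (algebraMap E L).injective y]; rfl
    _ ≤ finrank K E := minpoly.natDegree_le y
    _ = finrank K F * (minpoly F x).natDegree := by
        rw [← Module.finrank_mul_finrank K F E, IntermediateField.adjoin.finrank hx]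

theorem IsPrimitiveRoot.totient_le_finrank_mul_natDegree_minpoly {F L : Type*} [Field F]
    [NumberField F] [Field L] [CharZero L] [Algebra F L] {n : ℕ} [NeZero n] {ζ : L}
    (hζ : IsPrimitiveRoot ζ n) : n.totient ≤ finrank ℚ F * (minpoly F ζ).natDegree := by
  have hint : IsIntegral F ζ := (hζ.isIntegral (NeZero.pos n)).tower_top
  calc n.totient = (minpoly ℚ ζ).natDegree := by
        rw [← cyclotomic_eq_minpoly_rat hζ (NeZero.pos n), natDegree_cyclotomic]
    _ ≤ _ := minpoly.natDegree_le_finrank_mul_natDegree ℚ hint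

namespace IsPrimitiveRoot

theorem autToPow_eq_iff {R S : Type*} [CommRing R] [CommRing S] [IsDomain S] [Algebra R S]
    {n : ℕ} [NeZero n] {μ : S} (hμ : IsPrimitiveRoot μ n) {σ τ : S ≃ₐ[R] S} :
    hμ.autToPow R σ = hμ.autToPow R τ ↔ σ μ = τ μ := by
  refine ⟨fun h => by rw [← autToPow_spec R hμ σ, ← autToPow_spec R hμ τ, h], fun h => ?_⟩
  refine Units.ext <| ZMod.val_injective n <| hμ.pow_inj (ZMod.val_lt _) (ZMod.val_lt _) ?_
  rwa [autToPow_spec, autToPow_spec]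

variable {F L : Type*} [Field F] [Field L] [Algebra F L] {n : ℕ} [NeZero n] {ζ : L}

theorem natDegree_minpoly_le_card_range_autToPow [IsGalois F L] (hζ : IsPrimitiveRoot ζ n) :
    (minpoly F ζ).natDegree ≤ Nat.card (hζ.autToPow F).range := by
  have hroots : (minpoly F ζ).rootSet L ⊆
      Set.range fun a : (hζ.autToPow F).range => ζ ^ ((a : (ZMod n)ˣ) : ZMod n).val := by
    intro r hr
    obtain ⟨σ, rfl⟩ := minpoly.exists_algEquiv_of_root' (Algebra.IsAlgebraic.isAlgebraic ζ)
      ((mem_rootSet.mp hr).2)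
    exact ⟨⟨_, σ, rfl⟩, autToPow_spec F hζ σ⟩
  calc (minpoly F ζ).natDegree = Nat.card ((minpoly F ζ).rootSet L) := by
        rw [Nat.card_eq_fintype_card, card_rootSet_eq_natDegree
          (Algebra.IsSeparable.isSeparable F ζ) (Normal.splits inferInstance ζ)]
    _ ≤ Nat.card (Set.range _) := Nat.card_mono (Set.toFinite _) hroots
    _ ≤ _ := Finite.card_range_le _

theorem index_range_autToPow_le [NumberField F] [CharZero L] [IsGalois F L]
    (hζ : IsPrimitiveRoot ζ n) :
    (hζ.autToPow F).range.index ≤ finrank ℚ F := by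
  have hcard := (hζ.autToPow F).range.index_mul_card
  rw [Nat.card_eq_fintype_card (α := (ZMod n)ˣ), ZMod.card_units_eq_totient] at hcard
  refine Nat.le_of_mul_le_mul_right ?_ (Nat.card_pos (α := (hζ.autToPow F).range))
  calc _ = n.totient := hcard
    _ ≤ finrank ℚ F * (minpoly F ζ).natDegree := hζ.totient_le_finrank_mul_natDegree_minpoly
    _ ≤ _ := Nat.mul_le_mul_left _ hζ.natDegree_minpoly_le_card_range_autToPow

theorem units_pow_eq_one_of_forall_pow_apply_eq [NumberField F] [CharZero L] [IsGalois F L]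
    (hζ : IsPrimitiveRoot ζ n) {i : ℕ} (hfix : ∀ σ : L ≃ₐ[F] L, (σ ^ i) ζ = ζ) (a : (ZMod n)ˣ) :
    a ^ ((finrank ℚ F).factorial * i) = 1 := by
  obtain ⟨σ, hσ⟩ := (hζ.autToPow F).range.pow_factorial_mem hζ.index_range_autToPow_le a
  rw [pow_mul, ← hσ, ← map_pow, ← map_one (hζ.autToPow F), hζ.autToPow_eq_iff]
  exact hfix σ

end IsPrimitiveRoot

theorem orderOf_le_of_forall_pow_apply_eq {F L : Type*} [Field F] [NumberField F] [Field L]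
    [CharZero L] [Algebra F L] [IsGalois F L] {ζ : L} (hζ : IsOfFinOrder ζ) {i : ℕ} (hi : i ≠ 0)
    (hfix : ∀ σ : L ≃ₐ[F] L, (σ ^ i) ζ = ζ) :
    orderOf ζ ≤ 6 ^ ((finrank ℚ F).factorial * i) := by
  have : NeZero (orderOf ζ) := ⟨hζ.orderOf_pos.ne'⟩
  exact ZMod.le_six_pow_of_forall_units_pow_eq_one (mul_ne_zero (Nat.factorial_ne_zero _) hi)
    ((IsPrimitiveRoot.orderOf ζ).units_pow_eq_one_of_forall_pow_apply_eq hfix)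

/-- For a number field `F` and `i ≥ 1`, the set
`μ^{(i)}(F) = {ζ ∈ μ(F̄) : σ^i ζ = ζ for all σ ∈ Gal(F̄/F)}` is finite. -/
theorem mu_i_finite (F : Type*) [Field F] [NumberField F] (i : ℕ) (hi : 1 ≤ i) :
    {ζ : AlgebraicClosure F | (∃ n : ℕ, 0 < n ∧ ζ ^ n = 1) ∧
      ∀ σ : AlgebraicClosure F ≃ₐ[F] AlgebraicClosure F, (σ ^ i) ζ = ζ}.Finite := by
  let N := (6 ^ ((finrank ℚ F).factorial * i)).factorial
  refine (nthRootsFinset N (1 : AlgebraicClosure F)).finite_toSet.subset ?_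
  rintro ζ ⟨⟨k, hk, hζk⟩, hfix⟩
  have hζ : IsOfFinOrder ζ := isOfFinOrder_iff_pow_eq_one.mpr ⟨k, hk, hζk⟩
  rw [Finset.mem_coe, mem_nthRootsFinset (Nat.factorial_pos _)]
  exact orderOf_dvd_iff_pow_eq_one.mp <| Nat.dvd_factorial hζ.orderOf_pos <|
    orderOf_le_of_forall_pow_apply_eq hζ (by omega) hfix
end
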